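/- Let p be prime, g a primitive root mod p, and W a d×d matrix with W[ℓ,m] = g^(w[ℓ,m]). Let P_S = λ_S • BaseX, P_R = λ_R • BaseX, Q_S = ω_S • BaseY, Q_R = ω_R • BaseY over ZMod (p-1). Then RDMPF(P_S, RDMPF(P_R, W, Q_R), Q_S) = RDMPF(P_R, RDMPF(P_S, W, Q_S), Q_R) as matrices over ZMod p. -/
import Mathlib


/-- RDMPF with exponent matrices over `ZMod (p-1)`, exponents taken as
canonical representatives. -/
def RDMPFz (p d : ℕ) (X : Matrix (Fin d) (Fin d) (ZMod (p - 1)))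
    (W : Matrix (Fin d) (Fin d) (ZMod p))
    (Y : Matrix (Fin d) (Fin d) (ZMod (p - 1))) :
    Matrix (Fin d) (Fin d) (ZMod p) :=
  fun j k => ∏ ℓ : Fin d, ∏ m : Fin d, W ℓ m ^ (X j ℓ * Y m k).val

lemma pow_mod' {p : ℕ} (g : ZMod p) (hg : orderOf g = p - 1) [NeZero (p-1)]
    (a : ZMod (p-1)) (n : ℕ) (h : (n : ZMod (p-1)) = a) : g ^ n = g ^ a.val := by
  subst h
  rw [ZMod.val_natCast, ← hg, pow_mod_orderOf]

lemma RDMPFz_eq (p d : ℕ) (hp : p.Prime) (g : ZMod p) (hg : orderOf g = p - 1)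
    (w X Y : Matrix (Fin d) (Fin d) (ZMod (p - 1)))
    (W : Matrix (Fin d) (Fin d) (ZMod p))
    (hW : ∀ ℓ m, W ℓ m = g ^ (w ℓ m).val) (j k : Fin d) :
    RDMPFz p d X W Y j k
      = g ^ (∑ ℓ : Fin d, ∑ m : Fin d, w ℓ m * (X j ℓ * Y m k)).val := by
  haveI : NeZero (p - 1) := ⟨by have := hp.two_le; omega⟩
  unfold RDMPFz
  simp only [hW, ← pow_mul, Finset.prod_pow_eq_pow_sum]
  apply pow_mod' g hg
  push_cast [ZMod.natCast_val, ZMod.cast_id]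
  ring

theorem stmt_7 (p d : ℕ) (hp : p.Prime) (g : ZMod p)
    (hg : orderOf g = p - 1)
    (w BaseX BaseY : Matrix (Fin d) (Fin d) (ZMod (p - 1)))
    (W : Matrix (Fin d) (Fin d) (ZMod p))
    (hW : ∀ ℓ m, W ℓ m = g ^ (w ℓ m).val)
    (lS lR wS wR : ZMod (p - 1)) :
    RDMPFz p d (lS • BaseX) (RDMPFz p d (lR • BaseX) W (wR • BaseY)) (wS • BaseY) =
      RDMPFz p d (lR • BaseX) (RDMPFz p d (lS • BaseX) W (wS • BaseY)) (wR • BaseY) := by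
  funext j k
  have h1 : ∀ (X Y : Matrix (Fin d) (Fin d) (ZMod (p-1))) ℓ m,
      RDMPFz p d X W Y ℓ m
        = g ^ (∑ a : Fin d, ∑ b : Fin d, w a b * (X ℓ a * Y b m)).val :=
    fun X Y ℓ m => RDMPFz_eq p d hp g hg w X Y W hW ℓ m
  rw [RDMPFz_eq p d hp g hg _ _ _ _ (h1 (lR • BaseX) (wR • BaseY)) j k,
      RDMPFz_eq p d hp g hg _ _ _ _ (h1 (lS • BaseX) (wS • BaseY)) j k]
  congr 2
  simp only [Matrix.smul_apply, smul_eq_mul, Finset.sum_mul, Finset.mul_sum]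
  refine Finset.sum_congr rfl fun ℓ _ => Finset.sum_congr rfl fun m _ =>
    Finset.sum_congr rfl fun a _ => Finset.sum_congr rfl fun b _ => by ring
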